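/- arXiv:2407.07809 — 3 statements merged into one kernel-verified Lean document; each statement's English description precedes it below -/
import Mathlib

section
/- (Lemma 1, identifiability of Σ under UVC.) Let A be a q×p binding matrix with entries in {0,1}, let Σ = (σ_{lk}) be a p×p symmetric matrix, let Γ be a q×q diagonal matrix, and set C = (c_{ij}) = A Σ Aᵀ + Γ. For l ∈ {1,…,p}, let S_l = {j : the j-th row of A equals the l-th standard basis vector of ℝ^p}, and assume the unique-variable condition (UVC): |S_l| ≥ 2 for every l. Then Σ is uniquely determined from C and A by σ_{ll} = (|S_l|(|S_l|−1))^{-1} Σ_{i,j ∈ S_l, i≠j} c_{ij} for every l, and σ_{lk} = (|S_l||S_k|)^{-1} Σ_{i ∈ S_l, j ∈ S_k} c_{ij} for every l ≠ k. -/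
/-!
Rows of `A` indexed by `S_l` are the standard basis vector `e_l`, so for `i ∈ S_l`, `j ∈ S_k`
the entry `(A Σ Aᵀ)_{ij}` is `σ_{lk}`, and off the diagonal `Γ` contributes nothing. Hence every
`c_{ij}` with `i ∈ S_l`, `j ∈ S_k`, `i ≠ j` equals `σ_{lk}`; the UVC guarantees such pairs exist,
and `σ_{lk}` is their average.
-/

open Matrix Finset

noncomputable section

open scoped Classical in
/-- The set of unique lower-level variables of the `l`-th higher-level variable:
indices `j` whose row of `A` equals the `l`-th standard basis vector. -/
noncomputable def uniqueSet {q p : ℕ} (A : Matrix (Fin q) (Fin p) ℝ) (l : Fin p) :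
    Finset (Fin q) :=
  Finset.univ.filter fun j => ∀ k, A j k = if k = l then 1 else 0

theorem Matrix.mul_mul_transpose_apply_of_row_eq_single {m n R : Type*} [Fintype n]
    [DecidableEq n] [CommSemiring R] {A B : Matrix m n R} (M : Matrix n n R) {i j : m} {l k : n}
    (hi : A i = Pi.single l 1) (hj : B j = Pi.single k 1) :
    (A * M * Bᵀ) i j = M l k := by
  simp [Matrix.mul_apply, hi, hj, Pi.single_apply]

theorem Finset.eq_inv_mul_sum_sum_erase {ι K : Type*} [DecidableEq ι] [Field K] [CharZero K]
    {s : Finset ι} (hs : 2 ≤ #s) {f : ι → ι → K} {c : K}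
    (hf : ∀ i ∈ s, ∀ j ∈ s, i ≠ j → f i j = c) :
    c = ((#s : K) * ((#s : K) - 1))⁻¹ * ∑ i ∈ s, ∑ j ∈ s.erase i, f i j := by
  have hsum : ∑ i ∈ s, ∑ j ∈ s.erase i, f i j = ∑ i ∈ s, ((#s - 1 : ℕ) : K) * c := by
    refine sum_congr rfl fun i hi => ?_
    rw [sum_congr rfl fun j hj => hf i hi j (mem_of_mem_erase hj) (ne_of_mem_erase hj).symm,
      sum_const, card_erase_of_mem hi, nsmul_eq_mul]
  have hne : (#s : K) * ((#s : K) - 1) ≠ 0 := by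
    rw [← Nat.cast_pred (by omega), ← Nat.cast_mul, Nat.cast_ne_zero]
    exact Nat.mul_ne_zero (by omega) (by omega)
  rw [hsum, sum_const, nsmul_eq_mul, Nat.cast_pred (by omega), eq_inv_mul_iff_mul_eq₀ hne]
  ring

theorem Finset.eq_inv_mul_sum_sum {ι κ K : Type*} [Field K] [CharZero K]
    {s : Finset ι} {t : Finset κ} (hs : s.Nonempty) (ht : t.Nonempty) {f : ι → κ → K} {c : K}
    (hf : ∀ i ∈ s, ∀ j ∈ t, f i j = c) :
    c = ((#s : K) * (#t : K))⁻¹ * ∑ i ∈ s, ∑ j ∈ t, f i j := by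
  have hne : (#s : K) * (#t : K) ≠ 0 := by simp [hs.ne_empty, ht.ne_empty]
  rw [sum_congr rfl fun i hi => sum_congr rfl fun j hj => hf i hi j hj]
  simp only [sum_const, nsmul_eq_mul]
  rw [eq_inv_mul_iff_mul_eq₀ hne, mul_assoc]

section UniqueVariables

variable {q p : ℕ} {A : Matrix (Fin q) (Fin p) ℝ}

theorem mem_uniqueSet {l : Fin p} {i : Fin q} : i ∈ uniqueSet A l ↔ A i = Pi.single l 1 := by
  simp [uniqueSet, funext_iff, Pi.single_apply]

theorem disjoint_uniqueSet {l k : Fin p} (hlk : l ≠ k) :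
    Disjoint (uniqueSet A l) (uniqueSet A k) := by
  refine disjoint_left.mpr fun i hl hk => ?_
  have := congrFun (mem_uniqueSet.mp hl ▸ mem_uniqueSet.mp hk) l
  simp [hlk] at this

theorem mul_mul_transpose_add_apply_of_mem_uniqueSet (Sig : Matrix (Fin p) (Fin p) ℝ)
    {Γ : Matrix (Fin q) (Fin q) ℝ} (hΓ : Γ.IsDiag) {l k : Fin p} {i j : Fin q}
    (hi : i ∈ uniqueSet A l) (hj : j ∈ uniqueSet A k) (hij : i ≠ j) :
    (A * Sig * Aᵀ + Γ) i j = Sig l k := by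
  rw [Matrix.add_apply, hΓ hij, add_zero,
    mul_mul_transpose_apply_of_row_eq_single Sig (mem_uniqueSet.mp hi) (mem_uniqueSet.mp hj)]

end UniqueVariables

theorem stmt2_general {q p : ℕ} (A : Matrix (Fin q) (Fin p) ℝ)
    (hUVC : ∀ l, 2 ≤ (uniqueSet A l).card)
    (Sig : Matrix (Fin p) (Fin p) ℝ)
    (Γ : Matrix (Fin q) (Fin q) ℝ) (hΓ : Γ.IsDiag)
    (C : Matrix (Fin q) (Fin q) ℝ) (hC : C = A * Sig * Aᵀ + Γ) :
    (∀ l : Fin p,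
      Sig l l = (((uniqueSet A l).card : ℝ) * (((uniqueSet A l).card : ℝ) - 1))⁻¹ *
        ∑ i ∈ uniqueSet A l, ∑ j ∈ (uniqueSet A l).erase i, C i j) ∧
    (∀ l k : Fin p, l ≠ k →
      Sig l k = (((uniqueSet A l).card : ℝ) * ((uniqueSet A k).card : ℝ))⁻¹ *
        ∑ i ∈ uniqueSet A l, ∑ j ∈ uniqueSet A k, C i j) := by
  subst hC
  have hne : ∀ l, (uniqueSet A l).Nonempty := fun l => card_pos.mp (one_le_two.trans (hUVC l))
  refine ⟨fun l => eq_inv_mul_sum_sum_erase (hUVC l) fun i hi j hj hij =>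
      mul_mul_transpose_add_apply_of_mem_uniqueSet Sig hΓ hi hj hij,
    fun l k hlk => eq_inv_mul_sum_sum (hne l) (hne k) fun i hi j hj =>
      mul_mul_transpose_add_apply_of_mem_uniqueSet Sig hΓ hi hj ?_⟩
  rintro rfl
  exact disjoint_left.mp (disjoint_uniqueSet hlk) hi hj

/-- Lemma 1, identifiability of Σ under UVC: if `C = A Σ Aᵀ + Γ` with `Γ`
diagonal and each unique set `S_l` has at least two elements, then `Σ` is determined from
`C` and `A` by `σ_{ll} = (|S_l|(|S_l|-1))⁻¹ ∑_{i,j ∈ S_l, i ≠ j} c_{ij}` and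
`σ_{lk} = (|S_l||S_k|)⁻¹ ∑_{i ∈ S_l, j ∈ S_k} c_{ij}` for `l ≠ k`. -/
theorem stmt2 {q p : ℕ} (A : Matrix (Fin q) (Fin p) ℝ)
    (hA : ∀ j k, A j k = 0 ∨ A j k = 1)
    (hUVC : ∀ l, 2 ≤ (uniqueSet A l).card)
    (Sig : Matrix (Fin p) (Fin p) ℝ) (hSig : Sig.IsSymm)
    (Γ : Matrix (Fin q) (Fin q) ℝ) (hΓ : Γ.IsDiag)
    (C : Matrix (Fin q) (Fin q) ℝ) (hC : C = A * Sig * Aᵀ + Γ) :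
    (∀ l : Fin p,
      Sig l l = (((uniqueSet A l).card : ℝ) * (((uniqueSet A l).card : ℝ) - 1))⁻¹ *
        ∑ i ∈ uniqueSet A l, ∑ j ∈ (uniqueSet A l).erase i, C i j) ∧
    (∀ l k : Fin p, l ≠ k →
      Sig l k = (((uniqueSet A l).card : ℝ) * ((uniqueSet A k).card : ℝ))⁻¹ *
        ∑ i ∈ uniqueSet A l, ∑ j ∈ uniqueSet A k, C i j) :=
  stmt2_general A hUVC Sig Γ hΓ C hC
end
end

section
/- (Risk decomposition of the shrinkage estimator.) Let Σ = (σ_{lk}) be a deterministic p×p symmetric real matrix and let Σ̂ = (σ̂_{lk}) be a random p×p symmetric matrix on a probability space whose entries are square-integrable and unbiased: E[σ̂_{lk}] = σ_{lk} for all l,k. Define α² = E‖Σ − diag(Σ̂)‖_F², β² = Σ_{l=1}^p E(σ̂_{ll} − σ_{ll})², and γ² = E‖Σ̂ − Σ‖_F². Then for every ρ ∈ ℝ, E‖ρ diag(Σ̂) + (1−ρ) Σ̂ − Σ‖_F² = ρ² α² + 2ρ(1−ρ) β² + (1−ρ)² γ². -/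
open Matrix MeasureTheory

/-! The error of the shrinkage estimator is `ρ (diag Σ̂ - Σ) + (1 - ρ) (Σ̂ - Σ)`. Expanding its
squared Frobenius norm gives the `α²` and `γ²` terms plus the cross term
`2ρ(1 - ρ) E⟨diag Σ̂ - Σ, Σ̂ - Σ⟩`. Off the diagonal, `diag Σ̂ - Σ` has the deterministic
entries `-σ_lk`, which are orthogonal in expectation to the centred `σ̂_lk - σ_lk` by
unbiasedness; on the diagonal both factors are `σ̂_ll - σ_ll`, so the cross term is `β²`. -/

theorem sum_sum_sq_smul_add_one_sub_smul_sub {m n R : Type*} [Fintype m] [Fintype n]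
    [CommRing R] (ρ : R) (A C B : Matrix m n R) :
    ∑ i, ∑ j, ((ρ • A + (1 - ρ) • C - B) i j) ^ 2
      = ρ ^ 2 * ∑ i, ∑ j, ((B - A) i j) ^ 2
        + 2 * ρ * (1 - ρ) * ∑ i, ∑ j, (A - B) i j * (C - B) i j
        + (1 - ρ) ^ 2 * ∑ i, ∑ j, (C i j - B i j) ^ 2 := by
  simp only [Finset.mul_sum, ← Finset.sum_add_distrib]
  refine Finset.sum_congr rfl fun i _ => Finset.sum_congr rfl fun j _ => ?_
  simp only [Matrix.sub_apply, Matrix.add_apply, Matrix.smul_apply, smul_eq_mul]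
  ring

section RandomMatrix

variable {Ω : Type*} [MeasurableSpace Ω] {μ : Measure Ω} {m n : Type*}

theorem memLp_diagonal_diag_apply [DecidableEq n] {p : ENNReal} {M : Ω → Matrix n n ℝ}
    (hM : ∀ i, MemLp (fun ω => M ω i i) p μ) (i j : n) :
    MemLp (fun ω => diagonal (fun t => M ω t t) i j) p μ := by
  by_cases h : i = j
  · subst h
    simp [hM i]
  · simp [diagonal_apply_ne _ h]

variable [Fintype m] [Fintype n]

theorem integrable_sum_sum_sq {f : m → n → Ω → ℝ} (hf : ∀ i j, MemLp (f i j) 2 μ) :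
    Integrable (fun ω => ∑ i, ∑ j, f i j ω ^ 2) μ :=
  integrable_finsetSum _ fun i _ => integrable_finsetSum _ fun j _ => (hf i j).integrable_sq

theorem integrable_sum_sum_mul {f g : m → n → Ω → ℝ} (hf : ∀ i j, MemLp (f i j) 2 μ)
    (hg : ∀ i j, MemLp (g i j) 2 μ) :
    Integrable (fun ω => ∑ i, ∑ j, f i j ω * g i j ω) μ :=
  integrable_finsetSum _ fun i _ => integrable_finsetSum _ fun j _ =>
    (hf i j).integrable_mul (hg i j)

theorem integral_sum_sum {f : m → n → Ω → ℝ} (hf : ∀ i j, Integrable (f i j) μ) :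
    ∫ ω, ∑ i, ∑ j, f i j ω ∂μ = ∑ i, ∑ j, ∫ ω, f i j ω ∂μ := by
  rw [integral_finsetSum _ fun i _ => integrable_finsetSum _ fun j _ => hf i j]
  exact Finset.sum_congr rfl fun i _ => integral_finsetSum _ fun j _ => hf i j

theorem integral_sum_sum_diagonal_sub_mul_sub [IsProbabilityMeasure μ] [DecidableEq n]
    {M : Ω → Matrix n n ℝ} {S : Matrix n n ℝ} (hM : ∀ i j, MemLp (fun ω => M ω i j) 2 μ)
    (hunbiased : ∀ i j, ∫ ω, M ω i j ∂μ = S i j) :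
    ∫ ω, ∑ i, ∑ j, (diagonal (fun t => M ω t t) - S) i j * (M ω - S) i j ∂μ
      = ∑ l, ∫ ω, (M ω l l - S l l) ^ 2 ∂μ := by
  have entry : ∀ i j, ∫ ω, (diagonal (fun t => M ω t t) - S) i j * (M ω - S) i j ∂μ
      = if i = j then ∫ ω, (M ω i i - S i i) ^ 2 ∂μ else 0 := by
    intro i j
    by_cases h : i = j
    · subst h
      simp [sq]
    · have centered : ∫ ω, (M ω i j - S i j) ∂μ = 0 := by
        rw [integral_sub ((hM i j).integrable one_le_two) (integrable_const _), hunbiased]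
        simp
      simp [h, integral_neg, integral_const_mul, centered]
  rw [integral_sum_sum (f := fun i j ω => (diagonal (fun t => M ω t t) - S) i j * (M ω - S) i j)
    fun i j => ((memLp_diagonal_diag_apply (fun l => hM l l) i j).sub
      (memLp_const (S i j))).integrable_mul ((hM i j).sub (memLp_const (S i j)))]
  simp only [entry, Finset.sum_ite_eq, Finset.mem_univ, if_true]

end RandomMatrix

theorem stmt9_general {Ω : Type*} [MeasurableSpace Ω] (μ : Measure Ω) [IsProbabilityMeasure μ]
    {p : ℕ} (Sig : Matrix (Fin p) (Fin p) ℝ)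
    (Shat : Ω → Matrix (Fin p) (Fin p) ℝ)
    (hL2 : ∀ l k, MemLp (fun ω => Shat ω l k) 2 μ)
    (hunbiased : ∀ l k, ∫ ω, Shat ω l k ∂μ = Sig l k)
    (α2 β2 γ2 : ℝ)
    (hα : α2 = ∫ ω, ∑ i, ∑ j, ((Sig - Matrix.diagonal fun t => Shat ω t t) i j) ^ 2 ∂μ)
    (hβ : β2 = ∑ l, ∫ ω, (Shat ω l l - Sig l l) ^ 2 ∂μ)
    (hγ : γ2 = ∫ ω, ∑ i, ∑ j, (Shat ω i j - Sig i j) ^ 2 ∂μ) :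
    ∀ ρ : ℝ,
      ∫ ω, ∑ i, ∑ j,
          ((ρ • Matrix.diagonal (fun t => Shat ω t t) + (1 - ρ) • Shat ω - Sig) i j) ^ 2 ∂μ
        = ρ ^ 2 * α2 + 2 * ρ * (1 - ρ) * β2 + (1 - ρ) ^ 2 * γ2 := by
  intro ρ
  have hDiag := memLp_diagonal_diag_apply fun l => hL2 l l
  have hShatSub : ∀ i j, MemLp (fun ω => Shat ω i j - Sig i j) 2 μ :=
    fun i j => (hL2 i j).sub (memLp_const _)
  have hα_int : Integrable
      (fun ω => ∑ i, ∑ j, ((Sig - Matrix.diagonal fun t => Shat ω t t) i j) ^ 2) μ :=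
    integrable_sum_sum_sq fun i j => (memLp_const (Sig i j)).sub (hDiag i j)
  have hcross_int : Integrable (fun ω => ∑ i, ∑ j,
      (Matrix.diagonal (fun t => Shat ω t t) - Sig) i j * (Shat ω - Sig) i j) μ :=
    integrable_sum_sum_mul (fun i j => (hDiag i j).sub (memLp_const (Sig i j))) hShatSub
  have hγ_int : Integrable (fun ω => ∑ i, ∑ j, (Shat ω i j - Sig i j) ^ 2) μ :=
    integrable_sum_sum_sq hShatSub
  simp_rw [sum_sum_sq_smul_add_one_sub_smul_sub]
  rw [integral_add ((hα_int.const_mul _).fun_add (hcross_int.const_mul _)) (hγ_int.const_mul _),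
    integral_add (hα_int.const_mul _) (hcross_int.const_mul _), integral_const_mul,
    integral_const_mul, integral_const_mul, ← hα, ← hγ,
    integral_sum_sum_diagonal_sub_mul_sub hL2 hunbiased, ← hβ]

/-- risk decomposition of the shrinkage estimator: for a deterministic
symmetric `Σ` and a random symmetric, square-integrable, unbiased estimator `Σ̂`, with
`α² = E‖Σ - diag(Σ̂)‖_F²`, `β² = ∑_l E(σ̂_{ll} - σ_{ll})²`, `γ² = E‖Σ̂ - Σ‖_F²`,
we have `E‖ρ diag(Σ̂) + (1-ρ) Σ̂ - Σ‖_F² = ρ²α² + 2ρ(1-ρ)β² + (1-ρ)²γ²` for all `ρ`. -/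
theorem stmt9 {Ω : Type*} [MeasurableSpace Ω] (μ : Measure Ω) [IsProbabilityMeasure μ]
    {p : ℕ} (Sig : Matrix (Fin p) (Fin p) ℝ) (hSig : Sig.IsSymm)
    (Shat : Ω → Matrix (Fin p) (Fin p) ℝ)
    (hsymm : ∀ ω, (Shat ω).IsSymm)
    (hL2 : ∀ l k, MemLp (fun ω => Shat ω l k) 2 μ)
    (hunbiased : ∀ l k, ∫ ω, Shat ω l k ∂μ = Sig l k)
    (α2 β2 γ2 : ℝ)
    (hα : α2 = ∫ ω, ∑ i, ∑ j, ((Sig - Matrix.diagonal fun t => Shat ω t t) i j) ^ 2 ∂μ)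
    (hβ : β2 = ∑ l, ∫ ω, (Shat ω l l - Sig l l) ^ 2 ∂μ)
    (hγ : γ2 = ∫ ω, ∑ i, ∑ j, (Shat ω i j - Sig i j) ^ 2 ∂μ) :
    ∀ ρ : ℝ,
      ∫ ω, ∑ i, ∑ j,
          ((ρ • Matrix.diagonal (fun t => Shat ω t t) + (1 - ρ) • Shat ω - Sig) i j) ^ 2 ∂μ
        = ρ ^ 2 * α2 + 2 * ρ * (1 - ρ) * β2 + (1 - ρ) ^ 2 * γ2 :=
  stmt9_general μ Sig Shat hL2 hunbiased α2 β2 γ2 hα hβ hγ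
end

section
/- (Strict risk improvement of the optimally shrunk estimator.) Let α², β², γ² be real numbers with β² ≥ 0, α² > β², γ² > β², and γ² > 0, define f(ρ) = ρ² α² + 2ρ(1−ρ) β² + (1−ρ)² γ², and let ρ* = (γ² − β²)/(α² + γ² − 2β²). Then f(ρ*)/γ² = (α²γ² − β⁴)/(α²γ² + γ⁴ − 2β²γ²), and this ratio is strictly less than 1. -/
/-!
The risk `f` is a quadratic in `ρ` with leading coefficient `α² + γ² - 2β² > 0`; its minimiser
`ρ*` gives `f ρ* = γ² - (γ² - β²)² / (α² + γ² - 2β²)`, which is strictly below `f 0 = γ²`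
because `γ² ≠ β²`.
-/

def shrinkageRisk (a b c ρ : ℝ) : ℝ := ρ ^ 2 * a + 2 * ρ * (1 - ρ) * b + (1 - ρ) ^ 2 * c

theorem shrinkageRisk_optimal {a b c : ℝ} (hD : a + c - 2 * b ≠ 0) :
    shrinkageRisk a b c ((c - b) / (a + c - 2 * b)) = (a * c - b ^ 2) / (a + c - 2 * b) := by
  set ρ := (c - b) / (a + c - 2 * b)
  have hρ : ρ * (a + c - 2 * b) = c - b := div_mul_cancel₀ _ hD
  rw [eq_div_iff hD, shrinkageRisk]
  -- the difference of the two sides is `(ρ (a + c - 2b) - (c - b))²`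
  linear_combination (ρ * (a + c - 2 * b) - (c - b)) * hρ

theorem shrinkageRisk_ratio_lt_one {a b c : ℝ} (hc : 0 < c) (hD : 0 < a + c - 2 * b) (hbc : b ≠ c) :
    (a * c - b ^ 2) / (a * c + c ^ 2 - 2 * b * c) < 1 := by
  have hcD : 0 < a * c + c ^ 2 - 2 * b * c := by nlinarith
  have hgap : 0 < (c - b) ^ 2 := by positivity [sub_ne_zero.mpr hbc.symm]
  rw [div_lt_one hcD]
  linarith

theorem stmt13_general (α2 β2 γ2 : ℝ) (hαβ : β2 < α2) (hγβ : β2 < γ2)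
    (hγ : 0 < γ2) :
    let f : ℝ → ℝ := fun ρ => ρ ^ 2 * α2 + 2 * ρ * (1 - ρ) * β2 + (1 - ρ) ^ 2 * γ2
    let ρstar : ℝ := (γ2 - β2) / (α2 + γ2 - 2 * β2)
    f ρstar / γ2 = (α2 * γ2 - β2 ^ 2) / (α2 * γ2 + γ2 ^ 2 - 2 * β2 * γ2) ∧
      (α2 * γ2 - β2 ^ 2) / (α2 * γ2 + γ2 ^ 2 - 2 * β2 * γ2) < 1 := by
  intro f ρstar
  have hD : 0 < α2 + γ2 - 2 * β2 := by linarith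
  refine ⟨?_, shrinkageRisk_ratio_lt_one hγ hD hγβ.ne⟩
  change shrinkageRisk α2 β2 γ2 ρstar / γ2 = _
  rw [shrinkageRisk_optimal hD.ne', div_div]
  congr 1
  ring

/-- strict risk improvement of the optimally shrunk estimator: with
`β² ≥ 0`, `α² > β²`, `γ² > β²`, `γ² > 0`, `f(ρ) = ρ²α² + 2ρ(1-ρ)β² + (1-ρ)²γ²`, and
`ρ* = (γ²-β²)/(α²+γ²-2β²)`, one has
`f(ρ*)/γ² = (α²γ² - β⁴)/(α²γ² + γ⁴ - 2β²γ²) < 1`. -/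
theorem stmt13 (α2 β2 γ2 : ℝ) (hβ : 0 ≤ β2) (hαβ : β2 < α2) (hγβ : β2 < γ2)
    (hγ : 0 < γ2) :
    let f : ℝ → ℝ := fun ρ => ρ ^ 2 * α2 + 2 * ρ * (1 - ρ) * β2 + (1 - ρ) ^ 2 * γ2
    let ρstar : ℝ := (γ2 - β2) / (α2 + γ2 - 2 * β2)
    f ρstar / γ2 = (α2 * γ2 - β2 ^ 2) / (α2 * γ2 + γ2 ^ 2 - 2 * β2 * γ2) ∧
      (α2 * γ2 - β2 ^ 2) / (α2 * γ2 + γ2 ^ 2 - 2 * β2 * γ2) < 1 :=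
  stmt13_general α2 β2 γ2 hαβ hγβ hγ
end
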